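/- Let n ≥ 1 be an integer and 0 < ε ≤ 1/4. On the set V = {v_{−1}, v_0, v_1, …, v_n}, define d(v_i, v_i) = 0 for all i, d(v_{−1}, v_i) = d(v_i, v_{−1}) = 2^i − ε for 0 ≤ i ≤ n, and d(v_i, v_j) = 2^{max(i,j)} for 0 ≤ i ≠ j ≤ n. Then: (i) d is a metric on V (it is symmetric, positive on distinct pairs, and satisfies the triangle inequality d(x,z) ≤ d(x,y) + d(y,z) for all x, y, z ∈ V); and (ii) for all 0 ≤ i ≤ n and 0 ≤ j ≤ n with j ≠ i, d(v_i, v_j) > d(v_i, v_{−1}), i.e., v_{−1} is the strictly nearest point of V to each of v_0, …, v_n. -/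
import Mathlib


/-- Welzl's star-like metric on the points `v_{−1}` (encoded `none`) and
`v_0, …, v_n` (encoded `some i`): `d(v_{−1}, v_i) = 2^i − ε` and
`d(v_i, v_j) = 2^{max(i,j)}` for distinct `i, j ≥ 0`. -/
def welzlDist (n : ℕ) (ε : ℝ) : Option (Fin (n+1)) → Option (Fin (n+1)) → ℝ
  | none, none => 0
  | none, some i => 2 ^ (i : ℕ) - ε
  | some i, none => 2 ^ (i : ℕ) - ε
  | some i, some j => if i = j then 0 else 2 ^ (max (i : ℕ) (j : ℕ))

/-- **Welzl's construction: a metric where `v_{−1}` is strictly nearest to every `v_i`.**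
For `n ≥ 1` and `0 < ε ≤ 1/4`: (i) `welzlDist` is a metric (zero on the diagonal,
positive on distinct pairs, symmetric, and satisfying the triangle inequality), and
(ii) for all `0 ≤ i, j ≤ n` with `j ≠ i`, `d(v_i, v_j) > d(v_i, v_{−1})`. -/
theorem stmt_12 (n : ℕ) (hn : 1 ≤ n) (ε : ℝ) (hε0 : 0 < ε) (hε : ε ≤ 1/4) :
    ((∀ x, welzlDist n ε x x = 0) ∧
     (∀ x y, x ≠ y → 0 < welzlDist n ε x y) ∧
     (∀ x y, welzlDist n ε x y = welzlDist n ε y x) ∧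
     (∀ x y z, welzlDist n ε x z ≤ welzlDist n ε x y + welzlDist n ε y z)) ∧
    (∀ i j : Fin (n+1), j ≠ i →
      welzlDist n ε (some i) none < welzlDist n ε (some i) (some j)) := by
  have h2 : ∀ k : ℕ, (1:ℝ) ≤ 2 ^ k := fun k => one_le_pow₀ (by norm_num)
  have hmono : ∀ a b : ℕ, a ≤ b → (2:ℝ)^a ≤ 2^b := fun a b h =>
    pow_le_pow_right₀ (by norm_num) h
  refine ⟨⟨?_, ?_, ?_, ?_⟩, ?_⟩
  · rintro (_|i) <;> simp [welzlDist]
  · rintro (_|i) (_|j) h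
    · exact absurd rfl h
    · simpa [welzlDist] using by linarith [h2 (j:ℕ)]
    · simpa [welzlDist] using by linarith [h2 (i:ℕ)]
    · have hij : i ≠ j := fun e => h (by rw [e])
      simp only [welzlDist, if_neg hij]
      positivity
  · rintro (_|i) (_|j) <;> simp [welzlDist]
    rcases eq_or_ne i j with rfl | hij
    · simp
    · rw [if_neg hij, if_neg (Ne.symm hij), max_comm]
  · have key : ∀ a b : ℕ, (2:ℝ)^a - ε ≤ 2^max a b := fun a b => by
      have := hmono a (max a b) (le_max_left _ _); linarith
    rintro (_|x) (_|y) (_|z) <;> simp only [welzlDist]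
    · norm_num
    · linarith
    · linarith [h2 (y:ℕ)]
    · rcases eq_or_ne y z with rfl | h
      · simp
      · rw [if_neg h]
        have := hmono (z:ℕ) (max (y:ℕ) (z:ℕ)) (le_max_right _ _)
        linarith [h2 (y:ℕ)]
    · linarith
    · rcases eq_or_ne x z with rfl | h
      · simp; linarith [h2 (x:ℕ)]
      · rw [if_neg h]
        have h1 := h2 (x:ℕ)
        have h2' := h2 (z:ℕ)
        have hm : (2:ℝ)^(max (x:ℕ) (z:ℕ)) ≤ 2^(x:ℕ) + 2^(z:ℕ) - 1 := by
          rcases max_cases (x:ℕ) (z:ℕ) with ⟨he, _⟩ | ⟨he, _⟩ <;> rw [he] <;> linarith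
        linarith
    · rcases eq_or_ne x y with rfl | h
      · simp
      · rw [if_neg h]
        have := hmono (x:ℕ) (max (x:ℕ) (y:ℕ)) (le_max_left _ _)
        linarith [h2 (y:ℕ)]
    · rcases eq_or_ne x z with rfl | hxz
      · rw [if_pos rfl]
        rcases eq_or_ne x y with rfl | hxy
        · simp
        · rw [if_neg hxy, if_neg (Ne.symm hxy)]
          have := h2 (max (x:ℕ) (y:ℕ)); rw [max_comm (y:ℕ)]; linarith
      · rw [if_neg hxz]
        rcases eq_or_ne x y with rfl | hxy
        · rw [if_pos rfl, if_neg hxz]; simp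
        · rcases eq_or_ne y z with rfl | hyz
          · rw [if_neg hxy, if_pos rfl]; simp
          · rw [if_neg hxy, if_neg hyz]
            have h1 := hmono (x:ℕ) (max (x:ℕ) (y:ℕ)) (le_max_left _ _)
            have h3 := hmono (z:ℕ) (max (y:ℕ) (z:ℕ)) (le_max_right _ _)
            have h4 : (0:ℝ) < 2^(max (x:ℕ) (y:ℕ)) := by positivity
            have h5 : (0:ℝ) < 2^(max (y:ℕ) (z:ℕ)) := by positivity
            rcases max_cases (x:ℕ) (z:ℕ) with ⟨he, _⟩ | ⟨he, _⟩ <;> rw [he] <;> linarith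
  · intro i j hji
    have hij : i ≠ j := fun e => hji (by rw [e])
    simp only [welzlDist, if_neg hij]
    have := hmono (i:ℕ) (max (i:ℕ) (j:ℕ)) (le_max_left _ _)
    linarith
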